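/- arXiv:1606.01715 — 5 statements merged into one kernel-verified Lean document; each statement's English description precedes it below -/
import Mathlib

section
/- α(2) = 3, α(4) = 6, and α(2^n) = 3·2^{n-2} for all n ≥ 3. -/
noncomputable def fibAlpha (n : ℕ) : ℕ := sInf {m | 0 < m ∧ n ∣ Nat.fib m}

/-!
The indices `m` with `n ∣ fib m` are closed under `gcd` (`Nat.fib_gcd`), so they are exactly the
multiples of `α(n)` (also when there is no positive such `m`, as then `α(n) = sInf ∅ = 0`); in
particular `α` is monotone for divisibility. From `α(2) = 3`, every `α(2^e)` with `e ≥ 1` is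
`3 · 2^i` for some `i`, and `i` is pinned down by the exact power of `2` in `fib (3 · 2^k)`: it is
`1` for `k = 0` and `k + 2` for `k ≥ 1`, by the doubling formula
`fib (2m) = fib m · (2 fib (m + 1) - fib m)`, whose second factor is twice an odd number once
`4 ∣ fib m` and `fib (m + 1)` is odd.
-/

open Nat

theorem dvd_fib_iff_fibAlpha_dvd (n m : ℕ) : n ∣ fib m ↔ fibAlpha n ∣ m := by
  set S := {m | 0 < m ∧ n ∣ fib m}
  rcases S.eq_empty_or_nonempty with hS | hS
  · have hα : fibAlpha n = 0 := (congrArg sInf hS).trans Nat.sInf_empty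
    rw [hα, zero_dvd_iff]
    refine ⟨fun hm => by_contra fun hm0 => hS.subset ⟨Nat.pos_of_ne_zero hm0, hm⟩, ?_⟩
    rintro rfl
    simp
  · obtain ⟨hαpos, hαdvd⟩ : fibAlpha n ∈ S := Nat.sInf_mem hS
    refine ⟨fun hm => ?_, fun h => hαdvd.trans (fib_dvd _ _ h)⟩
    have hgcd : n ∣ fib (Nat.gcd (fibAlpha n) m) := by
      rw [fib_gcd]
      exact Nat.dvd_gcd hαdvd hm
    have hle : fibAlpha n ≤ Nat.gcd (fibAlpha n) m :=
      Nat.sInf_le ⟨Nat.gcd_pos_of_pos_left _ hαpos, hgcd⟩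
    have heq : Nat.gcd (fibAlpha n) m = fibAlpha n :=
      le_antisymm (Nat.le_of_dvd hαpos (Nat.gcd_dvd_left _ _)) hle
    exact heq ▸ Nat.gcd_dvd_right _ _

theorem fibAlpha_dvd_fibAlpha {a b : ℕ} (h : a ∣ b) : fibAlpha a ∣ fibAlpha b :=
  (dvd_fib_iff_fibAlpha_dvd a _).1 <| h.trans <| (dvd_fib_iff_fibAlpha_dvd b _).2 dvd_rfl

theorem fibAlpha_two : fibAlpha 2 = 3 := by
  have hdvd : fibAlpha 2 ∣ 3 := (dvd_fib_iff_fibAlpha_dvd 2 3).1 (by norm_num)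
  rcases (Nat.dvd_prime prime_three).1 hdvd with h1 | h3
  · have : 2 ∣ fib 1 := (dvd_fib_iff_fibAlpha_dvd 2 1).2 (h1 ▸ dvd_rfl)
    norm_num at this
  · exact h3

theorem two_dvd_fib_iff (m : ℕ) : 2 ∣ fib m ↔ 3 ∣ m := by
  rw [dvd_fib_iff_fibAlpha_dvd, fibAlpha_two]

theorem fib_two_mul_eq_two_pow_mul_odd {m e u : ℕ} (hm : fib m = 2 ^ (e + 2) * u) (hu : Odd u)
    (hsucc : Odd (fib (m + 1))) : ∃ v, Odd v ∧ fib (2 * m) = 2 ^ (e + 3) * v := by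
  set q := 2 ^ (e + 1) * u
  have hmq : fib m = 2 * q := by rw [hm]; ring
  have hq : q ≤ fib (m + 1) := by have := fib_le_fib_succ (n := m); omega
  have hqeven : Even q := (Nat.even_pow.2 ⟨even_two, by omega⟩).mul_right u
  refine ⟨u * (fib (m + 1) - q), hu.mul (Nat.Odd.sub_even hq hsucc hqeven), ?_⟩
  have hfactor : 2 * fib (m + 1) - fib m = 2 * (fib (m + 1) - q) := by omega
  rw [fib_two_mul, hfactor, hm]
  ring

theorem fib_three_mul_two_pow_succ (k : ℕ) :
    ∃ u, Odd u ∧ fib (3 * 2 ^ (k + 1)) = 2 ^ (k + 3) * u := by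
  induction k with
  | zero => exact ⟨1, odd_one, by norm_num⟩
  | succ k ih =>
    obtain ⟨u, hu, hfib⟩ := ih
    have hsucc : Odd (fib (3 * 2 ^ (k + 1) + 1)) := by
      rw [← Nat.not_even_iff_odd, even_iff_two_dvd, two_dvd_fib_iff]
      omega
    rw [show 3 * 2 ^ (k + 2) = 2 * (3 * 2 ^ (k + 1)) by ring]
    exact fib_two_mul_eq_two_pow_mul_odd hfib hu hsucc

theorem not_two_pow_dvd_fib_three_mul_two_pow (k : ℕ) : ¬ 2 ^ (k + 3) ∣ fib (3 * 2 ^ k) := by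
  cases k with
  | zero => norm_num
  | succ k =>
    obtain ⟨u, hu, hfib⟩ := fib_three_mul_two_pow_succ k
    rw [hfib, pow_succ, Nat.mul_dvd_mul_iff_left (by positivity)]
    exact hu.not_two_dvd_nat

theorem fibAlpha_two_pow_eq {e k : ℕ} (he : e ≠ 0) (hdvd : 2 ^ e ∣ fib (3 * 2 ^ (k + 1)))
    (hndvd : ¬ 2 ^ e ∣ fib (3 * 2 ^ k)) : fibAlpha (2 ^ e) = 3 * 2 ^ (k + 1) := by
  rw [dvd_fib_iff_fibAlpha_dvd] at hdvd hndvd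
  obtain ⟨b, hb⟩ : 3 ∣ fibAlpha (2 ^ e) :=
    fibAlpha_two ▸ fibAlpha_dvd_fibAlpha (dvd_pow_self 2 he)
  rw [hb, Nat.mul_dvd_mul_iff_left three_pos] at hdvd hndvd
  rw [hb, Nat.eq_prime_pow_of_dvd_least_prime_pow prime_two hndvd hdvd]

theorem fibAlpha_two_pow :
    fibAlpha 2 = 3 ∧ fibAlpha 4 = 6 ∧ ∀ n : ℕ, 3 ≤ n → fibAlpha (2 ^ n) = 3 * 2 ^ (n - 2) := by
  refine ⟨fibAlpha_two, ?_, fun n hn => ?_⟩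
  · exact fibAlpha_two_pow_eq (e := 2) (k := 0) (by norm_num) (by norm_num) (by norm_num)
  · obtain ⟨k, rfl⟩ := Nat.exists_eq_add_of_le' hn
    obtain ⟨u, -, hfib⟩ := fib_three_mul_two_pow_succ k
    rw [show k + 3 - 2 = k + 1 by omega]
    exact fibAlpha_two_pow_eq (by omega) (hfib ▸ dvd_mul_right _ _)
      (not_two_pow_dvd_fib_three_mul_two_pow k)
end

section
/- If f is an arithmetic function, then for every n ≥ 1, (1*f)(a_n) = (1*f_α)(n); that is, ∑_{d | a_n} f(d) = ∑_{k | n} ∑_{m : α(m) = k} f(m). -/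
/-!
Since `gcd (a_i, a_j) = a_{gcd (i, j)}`, the set `{j ≥ 1 : m ∣ a_j}` is closed under `gcd`, so it
consists exactly of the multiples of its least element `α(m)`. Hence the divisors of `a_n` are
the `m` with `α(m) ∣ n`, and grouping them by the value of `α` gives the identity; the truncation
at `a_k` in the inner sum is harmless because `m ∣ a_{α(m)}` forces `m ≤ a_{α(m)}`.
-/

open Finset

lemma fibAlpha_pos_and_dvd_fib {m j : ℕ} (hj : 0 < j) (h : m ∣ Nat.fib j) :
    0 < fibAlpha m ∧ m ∣ Nat.fib (fibAlpha m) :=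
  Nat.sInf_mem (s := {k | 0 < k ∧ m ∣ Nat.fib k}) ⟨j, hj, h⟩

lemma fibAlpha_dvd_iff {m j : ℕ} (hj : 0 < j) : fibAlpha m ∣ j ↔ m ∣ Nat.fib j := by
  constructor
  · intro hdvd
    have hα : 0 < fibAlpha m := Nat.pos_of_dvd_of_pos hdvd hj
    -- `sInf ∅ = 0`, so `0 < fibAlpha m` forces the defining set to be nonempty.
    have hne : {k | 0 < k ∧ m ∣ Nat.fib k}.Nonempty := by
      by_contra h
      rw [Set.not_nonempty_iff_eq_empty] at h
      simp [fibAlpha, h] at hα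
    exact (Nat.sInf_mem hne).2.trans (Nat.fib_dvd _ _ hdvd)
  · intro h
    obtain ⟨hα, hαdvd⟩ := fibAlpha_pos_and_dvd_fib hj h
    have hgcd : m ∣ Nat.fib (Nat.gcd (fibAlpha m) j) := by
      rw [Nat.fib_gcd]
      exact Nat.dvd_gcd hαdvd h
    have hle : fibAlpha m ≤ Nat.gcd (fibAlpha m) j :=
      Nat.sInf_le ⟨Nat.gcd_pos_of_pos_right _ hj, hgcd⟩
    rw [← Nat.gcd_eq_left_iff_dvd]
    exact le_antisymm (Nat.le_of_dvd hα (Nat.gcd_dvd_left _ _)) hle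

lemma filter_fibAlpha_eq_divisors_fib {n k : ℕ} (hn : 0 < n) (hk : k ∣ n) :
    {m ∈ (Nat.fib n).divisors | fibAlpha m = k}
      = {m ∈ Icc 1 (Nat.fib k) | fibAlpha m = k} := by
  have hfib : Nat.fib n ≠ 0 := (Nat.fib_pos.mpr hn).ne'
  have hkpos : 0 < k := Nat.pos_of_dvd_of_pos hk hn
  ext m
  simp only [mem_filter, Nat.mem_divisors, mem_Icc, and_congr_left_iff]
  rintro rfl
  constructor
  · rintro ⟨hm, -⟩
    exact ⟨Nat.pos_of_dvd_of_pos hm (Nat.fib_pos.mpr hn),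
      Nat.le_of_dvd (Nat.fib_pos.mpr hkpos) ((fibAlpha_dvd_iff hkpos).mp dvd_rfl)⟩
  · exact fun _ ↦ ⟨(fibAlpha_dvd_iff hn).mp hk, hfib⟩

/-- Corollary: `(1*f)(a_n) = (1*f_α)(n)`.  The inner sum over `{m : α m = k}` is
finite, being contained in `Icc 1 (fib k)`. -/
theorem one_conv_fib (f : ℕ → ℂ) (n : ℕ) (hn : 1 ≤ n) :
    ∑ d ∈ (Nat.fib n).divisors, f d
      = ∑ k ∈ n.divisors, ∑ m ∈ (Icc 1 (Nat.fib k)).filter (fun m => fibAlpha m = k), f m := by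
  have hmaps : ∀ m ∈ (Nat.fib n).divisors, fibAlpha m ∈ n.divisors := fun m hm ↦
    Nat.mem_divisors.mpr ⟨(fibAlpha_dvd_iff hn).mpr (Nat.dvd_of_mem_divisors hm), by omega⟩
  rw [← sum_fiberwise_of_maps_to hmaps]
  refine sum_congr rfl fun k hk ↦ ?_
  rw [filter_fibAlpha_eq_divisors_fib hn (Nat.dvd_of_mem_divisors hk)]
end

section
/- If f and g are arithmetic functions with g completely multiplicative and nowhere zero, then for all n ≥ 1, (f*g)(a_n) = g(a_n) · (1 * (f/g)_α)(n). -/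
/-!
Write `F = Nat.fib` and `α = fibAlpha`. Complete multiplicativity gives
`g (N / d) * g d = g N` for `d ∣ N`, so the left side is `g (F n) * ∑_{d ∣ F n} f d / g d`.
Grouping the divisors `d` of `F n` by `α d` gives the right side, because `d ∣ F m ↔ α d ∣ m`
(strong divisibility `gcd (F a) (F b) = F (gcd a b)`) and every `d` with `α d = k` satisfies
`d ≤ F k`. The rank `α d` exists since `(a, b) ↦ (b, a + b)` is a permutation of the finite set
`(ZMod d)²`: after `orderOf` steps the orbit `(F k, F (k + 1))` of `(0, 1)` returns to `(0, 1)`,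
so `d` divides that Fibonacci number.
-/

open Finset

def fibStep (R : Type*) [Ring R] : Equiv.Perm (R × R) where
  toFun p := (p.2, p.1 + p.2)
  invFun p := (p.2 - p.1, p.1)
  left_inv p := by simp
  right_inv p := by simp

theorem fibStep_pow_apply_zero_one (R : Type*) [Ring R] (k : ℕ) :
    (fibStep R ^ k) (0, 1) = ((Nat.fib k : R), (Nat.fib (k + 1) : R)) := by
  induction k with
  | zero => simp
  | succ k ih =>
    rw [pow_succ', Equiv.Perm.mul_apply, ih]
    simp [fibStep, Nat.fib_add_two]

theorem exists_pos_dvd_fib {d : ℕ} (hd : d ≠ 0) : ∃ m, 0 < m ∧ d ∣ Nat.fib m := by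
  have : NeZero d := ⟨hd⟩
  refine ⟨orderOf (fibStep (ZMod d)), orderOf_pos _, ?_⟩
  have := fibStep_pow_apply_zero_one (ZMod d) (orderOf (fibStep (ZMod d)))
  rw [pow_orderOf_eq_one, Equiv.Perm.one_apply, Prod.ext_iff] at this
  exact (ZMod.natCast_eq_zero_iff _ _).mp this.1.symm

theorem fibAlpha_pos {d : ℕ} (hd : d ≠ 0) : 0 < fibAlpha d :=
  (Nat.sInf_mem (exists_pos_dvd_fib hd)).1

theorem dvd_fib_fibAlpha {d : ℕ} (hd : d ≠ 0) : d ∣ Nat.fib (fibAlpha d) :=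
  (Nat.sInf_mem (exists_pos_dvd_fib hd)).2

theorem dvd_fib_iff_fibAlpha_dvd_s5 {d : ℕ} (hd : d ≠ 0) (m : ℕ) :
    d ∣ Nat.fib m ↔ fibAlpha d ∣ m := by
  refine ⟨fun h ↦ ?_, fun h ↦ (dvd_fib_fibAlpha hd).trans (Nat.fib_dvd _ _ h)⟩
  have hgcd : d ∣ Nat.fib (Nat.gcd (fibAlpha d) m) := by
    rw [Nat.fib_gcd]; exact Nat.dvd_gcd (dvd_fib_fibAlpha hd) h
  have hle : fibAlpha d ≤ Nat.gcd (fibAlpha d) m :=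
    Nat.sInf_le ⟨Nat.gcd_pos_of_pos_left _ (fibAlpha_pos hd), hgcd⟩
  rw [← Nat.gcd_eq_left_iff_dvd]
  exact le_antisymm (Nat.gcd_le_left m (fibAlpha_pos hd)) hle

theorem sum_divisors_fib_eq_sum_divisors_sum_fibAlpha_eq {M : Type*} [AddCommMonoid M]
    (h : ℕ → M) (n : ℕ) :
    ∑ d ∈ (Nat.fib n).divisors, h d
      = ∑ k ∈ n.divisors, ∑ m ∈ (Icc 1 (Nat.fib k)).filter (fun m => fibAlpha m = k), h m := by
  have hmaps : ∀ d ∈ (Nat.fib n).divisors, fibAlpha d ∈ n.divisors := by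
    intro d hd
    obtain ⟨hdvd, hfib⟩ := Nat.mem_divisors.mp hd
    have hd0 : d ≠ 0 := ne_zero_of_dvd_ne_zero hfib hdvd
    exact Nat.mem_divisors.mpr
      ⟨(dvd_fib_iff_fibAlpha_dvd_s5 hd0 n).mp hdvd, mt Nat.fib_eq_zero.mpr hfib⟩
  rw [← sum_fiberwise_of_maps_to hmaps]
  refine sum_congr rfl fun k hk ↦ sum_congr (ext fun m ↦ ?_) fun _ _ ↦ rfl
  obtain ⟨hkn, hn⟩ := Nat.mem_divisors.mp hk
  simp only [mem_filter, mem_Icc, Nat.mem_divisors]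
  constructor
  · rintro ⟨⟨hm, hfib⟩, rfl⟩
    have hm0 : m ≠ 0 := ne_zero_of_dvd_ne_zero hfib hm
    exact ⟨⟨by omega, Nat.le_of_dvd (Nat.fib_pos.mpr (fibAlpha_pos hm0)) (dvd_fib_fibAlpha hm0)⟩,
      rfl⟩
  · rintro ⟨⟨hm, -⟩, rfl⟩
    exact ⟨⟨(dvd_fib_fibAlpha (by omega)).trans (Nat.fib_dvd _ _ hkn),
      mt Nat.fib_eq_zero.mp hn⟩, rfl⟩

theorem sum_divisors_mul_eq_mul_sum_div {K : Type*} [Field K] (f g : ℕ → K)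
    (hgmul : ∀ m n : ℕ, g (m * n) = g m * g n) (hg0 : ∀ n, g n ≠ 0) (N : ℕ) :
    ∑ d ∈ N.divisors, f d * g (N / d) = g N * ∑ d ∈ N.divisors, f d / g d := by
  rw [mul_sum]
  refine sum_congr rfl fun d hd ↦ ?_
  have hsplit : g N = g d * g (N / d) := by
    rw [← hgmul, Nat.mul_div_cancel' (Nat.dvd_of_mem_divisors hd)]
  rw [hsplit]
  field_simp [hg0 d]

theorem conv_completely_multiplicative_fib_general (f g : ℕ → ℂ)
    (hgmul : ∀ m n : ℕ, g (m * n) = g m * g n) (hg0 : ∀ n, g n ≠ 0)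
    (n : ℕ) :
    ∑ d ∈ (Nat.fib n).divisors, f d * g (Nat.fib n / d)
      = g (Nat.fib n) *
        ∑ k ∈ n.divisors, ∑ m ∈ (Icc 1 (Nat.fib k)).filter (fun m => fibAlpha m = k),
          f m / g m := by
  rw [sum_divisors_mul_eq_mul_sum_div f g hgmul hg0,
    sum_divisors_fib_eq_sum_divisors_sum_fibAlpha_eq]

/-- Corollary: for `g` completely multiplicative and nowhere zero,
`(f*g)(a_n) = g(a_n) ⬝ (1 * (f/g)_α)(n)`. -/
theorem conv_completely_multiplicative_fib (f g : ℕ → ℂ)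
    (hg1 : g 1 = 1) (hgmul : ∀ m n : ℕ, g (m * n) = g m * g n) (hg0 : ∀ n, g n ≠ 0)
    (n : ℕ) (hn : 1 ≤ n) :
    ∑ d ∈ (Nat.fib n).divisors, f d * g (Nat.fib n / d)
      = g (Nat.fib n) *
        ∑ k ∈ n.divisors, ∑ m ∈ (Icc 1 (Nat.fib k)).filter (fun m => fibAlpha m = k),
          f m / g m :=
  conv_completely_multiplicative_fib_general f g hgmul hg0 n
end

section
/- For real x ≥ 1, log ∏_{n ≤ x} a_n = (log r)/2 · ⌊x⌋² + (log(r/5))/2 · ⌊x⌋ + ∑_{n ≤ x} log(1 - (-1)^n/r^{2n}), where r = (1+√5)/2 is the golden ratio. -/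
open Finset Real goldenRatio

theorem Finset.sum_Icc_one_natCast {K : Type*} [Field K] [CharZero K] (N : ℕ) :
    ∑ i ∈ Icc 1 N, (i : K) = N * (N + 1) / 2 := by
  induction N with
  | zero => simp
  | succ N ih =>
    rw [sum_Icc_succ_top (by omega), ih]
    push_cast
    ring

namespace Real

-- Binet's formula, rewritten with `ψ = -1 / φ`.
theorem coe_fib_eq_goldenRatio_pow_mul (n : ℕ) :
    (Nat.fib n : ℝ) = φ ^ n / √5 * (1 - (-1) ^ n / φ ^ (2 * n)) := by
  have hφ : φ ^ n ≠ 0 := pow_ne_zero n goldenRatio_ne_zero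
  have hψ : ψ ^ n = (-1) ^ n / φ ^ n := by
    rw [eq_div_iff hφ, ← mul_pow, goldenConj_mul_goldenRatio]
  rw [coe_fib_eq, hψ, two_mul, pow_add]
  field_simp

theorem log_fib {n : ℕ} (hn : n ≠ 0) :
    log (Nat.fib n) = n * log φ - log 5 / 2 + log (1 - (-1) ^ n / φ ^ (2 * n)) := by
  have hfib : (0 : ℝ) < Nat.fib n := by exact_mod_cast Nat.fib_pos.2 (Nat.pos_of_ne_zero hn)
  have hfactor : 1 - (-1) ^ n / φ ^ (2 * n) ≠ 0 := by
    intro h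
    rw [coe_fib_eq_goldenRatio_pow_mul, h, mul_zero] at hfib
    exact hfib.false
  rw [coe_fib_eq_goldenRatio_pow_mul, log_mul (by positivity) hfactor,
    log_div (by positivity) (by positivity), log_pow, log_sqrt (by norm_num)]

end Real

theorem log_prod_fib_general (x : ℝ) :
    Real.log (∏ n ∈ Icc 1 ⌊x⌋₊, (Nat.fib n : ℝ))
      = Real.log ((1 + Real.sqrt 5) / 2) / 2 * (⌊x⌋₊ : ℝ) ^ 2
        + Real.log (((1 + Real.sqrt 5) / 2) / 5) / 2 * (⌊x⌋₊ : ℝ)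
        + ∑ n ∈ Icc 1 ⌊x⌋₊,
            Real.log (1 - (-1 : ℝ) ^ n / ((1 + Real.sqrt 5) / 2) ^ (2 * n)) := by
  rw [show (1 + √5) / 2 = φ from rfl]
  have hpos : ∀ n ∈ Icc 1 ⌊x⌋₊, 0 < n := fun n hn => (mem_Icc.1 hn).1
  rw [log_prod fun n hn => Nat.cast_ne_zero.2 (Nat.fib_pos.2 (hpos n hn)).ne',
    sum_congr rfl fun n hn => log_fib (hpos n hn).ne', sum_add_distrib, sum_sub_distrib, ← sum_mul,
    sum_Icc_one_natCast, sum_const, Nat.card_Icc, Nat.add_sub_cancel, nsmul_eq_mul,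
    log_div goldenRatio_ne_zero (by norm_num)]
  ring

/-- `log ∏_{n ≤ x} a_n` in terms of the golden ratio `r = (1+√5)/2`. -/
theorem log_prod_fib (x : ℝ) (hx : 1 ≤ x) :
    Real.log (∏ n ∈ Icc 1 ⌊x⌋₊, (Nat.fib n : ℝ))
      = Real.log ((1 + Real.sqrt 5) / 2) / 2 * (⌊x⌋₊ : ℝ) ^ 2
        + Real.log (((1 + Real.sqrt 5) / 2) / 5) / 2 * (⌊x⌋₊ : ℝ)
        + ∑ n ∈ Icc 1 ⌊x⌋₊,
            Real.log (1 - (-1 : ℝ) ^ n / ((1 + Real.sqrt 5) / 2) ^ (2 * n)) :=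
  log_prod_fib_general x
end

section
/- ∑_{n ≤ x} μ(n)·⌊x/n⌋² = x²/ζ(2) + O(x log x) as x → ∞, where μ is the Möbius function. -/
/-!
Write ⌊x/n⌋² = (x/n)² + O(x/n). The error terms add up to O(x ∑_{n ≤ x} 1/n) = O(x log x), and the
main term x² ∑_{n ≤ x} μ(n)/n² differs from x² ∑_n μ(n)/n² = x²/ζ(2) by at most x² ∑_{n > x} 1/n²
= O(x). Only |μ(n)| ≤ 1 enters the estimates, so they are proved for any coefficients bounded by 1;
the value ∑ μ(n)/n² = 1/ζ(2) comes from the Dirichlet series identity ζ(s) ∑ μ(n)/nˢ = 1.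
-/

open Finset Filter Asymptotics Real
open scoped ArithmeticFunction.Moebius

lemma abs_floor_sq_sub_sq_le {y : ℝ} (hy : 0 ≤ y) : |(⌊y⌋ : ℝ) ^ 2 - y ^ 2| ≤ 2 * y := by
  have h₀ : (0 : ℝ) ≤ ⌊y⌋ := mod_cast Int.floor_nonneg.mpr hy
  have h₁ : (⌊y⌋ : ℝ) ≤ y := Int.floor_le y
  have h₂ : y < ⌊y⌋ + 1 := Int.lt_floor_add_one y
  rw [abs_le]
  constructor <;> nlinarith

section BoundedCoefficients

variable {a : ℕ → ℝ}

lemma abs_div_sq_le_inv_sq (ha : ∀ n, |a n| ≤ 1) (n : ℕ) : |a n / n ^ 2| ≤ ((n : ℝ) ^ 2)⁻¹ := by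
  rw [abs_div, abs_of_nonneg (sq_nonneg (n : ℝ)), div_eq_mul_inv]
  exact mul_le_of_le_one_left (inv_nonneg.mpr (sq_nonneg _)) (ha n)

lemma summable_div_sq (ha : ∀ n, |a n| ≤ 1) : Summable fun n : ℕ => a n / n ^ 2 :=
  .of_norm_bounded (summable_nat_pow_inv.mpr one_lt_two) (abs_div_sq_le_inv_sq ha)

lemma abs_sum_Ioc_div_sq_le (ha : ∀ n, |a n| ≤ 1) {k n : ℕ} (hk : k ≠ 0) (hkn : k ≤ n) :
    |∑ i ∈ Ioc k n, a i / i ^ 2| ≤ (k : ℝ)⁻¹ :=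
  calc |∑ i ∈ Ioc k n, a i / i ^ 2|
      ≤ ∑ i ∈ Ioc k n, ((i : ℝ) ^ 2)⁻¹ :=
        (abs_sum_le_sum_abs _ _).trans (sum_le_sum fun i _ => abs_div_sq_le_inv_sq ha i)
    _ ≤ (k : ℝ)⁻¹ - (n : ℝ)⁻¹ := sum_Ioc_inv_sq_le_sub hk hkn
    _ ≤ (k : ℝ)⁻¹ := sub_le_self _ (inv_nonneg.mpr n.cast_nonneg)

lemma tendsto_sum_Icc_div_sq (ha : ∀ n, |a n| ≤ 1) :
    Tendsto (fun N => ∑ n ∈ Icc 1 N, a n / n ^ 2) atTop (nhds (∑' n : ℕ, a n / n ^ 2)) := by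
  refine ((summable_div_sq ha).hasSum.tendsto_sum_nat.comp (tendsto_add_atTop_nat 1)).congr
    fun N => ?_
  rw [Function.comp_apply, range_eq_Ico, sum_eq_sum_Ico_succ_bot N.succ_pos,
    Nat.succ_eq_add_one, Ico_add_one_right_eq_Icc]
  simp

lemma abs_tsum_sub_sum_Icc_div_sq_le (ha : ∀ n, |a n| ≤ 1) {N : ℕ} (hN : N ≠ 0) :
    |∑' n : ℕ, a n / n ^ 2 - ∑ n ∈ Icc 1 N, a n / n ^ 2| ≤ (N : ℝ)⁻¹ := by
  refine le_of_tendsto ((tendsto_sum_Icc_div_sq ha).sub_const _).abs ?_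
  filter_upwards [eventually_ge_atTop N] with M hM
  have hIcc (n : ℕ) : Icc 1 n = Ioc 0 n := Icc_add_one_left_eq_Ioc 0 n
  rw [hIcc, hIcc, ← sum_Ioc_consecutive _ N.zero_le hM, add_sub_cancel_left]
  exact abs_sum_Ioc_div_sq_le ha hN hM

lemma abs_sum_mul_floor_sq_sub_sq_le (ha : ∀ n, |a n| ≤ 1) {x : ℝ} (hx : 0 ≤ x) (N : ℕ) :
    |∑ n ∈ Icc 1 N, a n * ((⌊x / n⌋ : ℝ) ^ 2 - (x / n) ^ 2)| ≤ 2 * x * (1 + log N) :=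
  calc |∑ n ∈ Icc 1 N, a n * ((⌊x / n⌋ : ℝ) ^ 2 - (x / n) ^ 2)|
      ≤ ∑ n ∈ Icc 1 N, 2 * x * (n : ℝ)⁻¹ := by
        refine (abs_sum_le_sum_abs _ _).trans (sum_le_sum fun n _ => ?_)
        rw [abs_mul, mul_assoc, ← div_eq_mul_inv]
        exact (mul_le_of_le_one_left (abs_nonneg _) (ha n)).trans
          (abs_floor_sq_sub_sq_le (div_nonneg hx n.cast_nonneg))
    _ = 2 * x * harmonic N := by rw [← mul_sum, harmonic_eq_sum_Icc]; push_cast; rfl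
    _ ≤ 2 * x * (1 + log N) := by gcongr; exact harmonic_le_one_add_log N

lemma abs_sum_mul_floor_sq_sub_le (ha : ∀ n, |a n| ≤ 1) {x : ℝ} (hx : 1 ≤ x) :
    |∑ n ∈ Icc 1 ⌊x⌋₊, a n * (⌊x / n⌋ : ℝ) ^ 2 - x ^ 2 * ∑' n : ℕ, a n / n ^ 2|
      ≤ 2 * x * (2 + log x) := by
  set N := ⌊x⌋₊
  have hN : N ≠ 0 := (Nat.floor_pos.mpr hx).ne'
  have hNx : (N : ℝ) ≤ x := Nat.floor_le (by linarith)
  have hxN : x ≤ 2 * N := by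
    have : (1 : ℝ) ≤ N := mod_cast Nat.one_le_iff_ne_zero.mpr hN
    linarith [Nat.lt_floor_add_one x]
  have hsplit : ∑ n ∈ Icc 1 N, a n * (⌊x / n⌋ : ℝ) ^ 2 - x ^ 2 * ∑' n : ℕ, a n / n ^ 2
      = ∑ n ∈ Icc 1 N, a n * ((⌊x / n⌋ : ℝ) ^ 2 - (x / n) ^ 2)
        - x ^ 2 * (∑' n : ℕ, a n / n ^ 2 - ∑ n ∈ Icc 1 N, a n / n ^ 2) := by
    simp only [mul_sub, sum_sub_distrib, mul_sum, div_pow]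
    ring_nf
  have htail : x ^ 2 * |∑' n : ℕ, a n / n ^ 2 - ∑ n ∈ Icc 1 N, a n / n ^ 2| ≤ 2 * x :=
    calc _ ≤ x ^ 2 * (N : ℝ)⁻¹ := by gcongr; exact abs_tsum_sub_sum_Icc_div_sq_le ha hN
      _ ≤ 2 * x := by
        rw [← div_eq_mul_inv, div_le_iff₀ (by positivity)]
        nlinarith
  rw [hsplit]
  calc _ ≤ _ := abs_sub _ _
    _ ≤ 2 * x * (1 + log N) + 2 * x := by
        rw [abs_mul, abs_of_nonneg (sq_nonneg x)]
        exact add_le_add (abs_sum_mul_floor_sq_sub_sq_le ha (by linarith) N) htail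
    _ ≤ 2 * x * (2 + log x) := by
        have : log N ≤ log x := log_le_log (by positivity) hNx
        nlinarith

theorem isBigO_sum_mul_floor_sq_sub (ha : ∀ n, |a n| ≤ 1) :
    (fun x : ℝ => ∑ n ∈ Icc 1 ⌊x⌋₊, a n * (⌊x / n⌋ : ℝ) ^ 2 - x ^ 2 * ∑' n : ℕ, a n / n ^ 2)
      =O[atTop] fun x => x * log x := by
  refine isBigO_iff.mpr ⟨6, ?_⟩
  filter_upwards [eventually_ge_atTop (exp 1)] with x hx
  have hx1 : 1 ≤ x := (one_le_exp zero_le_one).trans hx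
  have hlog : 1 ≤ log x := (le_log_iff_exp_le (by linarith)).mpr hx
  rw [norm_eq_abs, norm_eq_abs,
    abs_of_nonneg (a := x * log x) (mul_nonneg (by linarith) (by linarith))]
  calc |_| ≤ 2 * x * (2 + log x) := abs_sum_mul_floor_sq_sub_le ha hx1
    _ ≤ 6 * (x * log x) := by nlinarith

end BoundedCoefficients

lemma LSeries_moebius_two : LSeries (fun n => (μ n : ℂ)) 2 = 6 / (π : ℂ) ^ 2 := by
  have hs : 1 < (2 : ℂ).re := by norm_num
  have h := ArithmeticFunction.LSeries_zeta_mul_Lseries_moebius hs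
  rw [ArithmeticFunction.LSeries_zeta_eq_riemannZeta hs, riemannZeta_two] at h
  rw [eq_div_iff (pow_ne_zero 2 (Complex.ofReal_ne_zero.mpr pi_ne_zero))]
  linear_combination 6 * h

lemma tsum_moebius_div_sq : ∑' n : ℕ, (μ n : ℝ) / n ^ 2 = 6 / π ^ 2 := by
  suffices h : ((∑' n : ℕ, (μ n : ℝ) / n ^ 2 : ℝ) : ℂ) = LSeries (fun n => (μ n : ℂ)) 2 by
    exact_mod_cast h.trans LSeries_moebius_two
  rw [Complex.ofReal_tsum, LSeries]
  congr 1 with n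
  rcases eq_or_ne n 0 with rfl | hn
  · simp
  · rw [LSeries.term_of_ne_zero hn, show (2 : ℂ) = (2 : ℕ) by norm_num, Complex.cpow_natCast]
    push_cast
    rfl

theorem moebius_floor_sq_sum_asymp :
    (fun x : ℝ =>
        (∑ n ∈ Icc 1 ⌊x⌋₊, (ArithmeticFunction.moebius n : ℝ) * (⌊x / (n : ℝ)⌋ : ℝ) ^ 2)
          - x ^ 2 / (Real.pi ^ 2 / 6))
      =O[atTop] fun x : ℝ => x * Real.log x := by
  have h := isBigO_sum_mul_floor_sq_sub (a := fun n => (μ n : ℝ))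
    fun n => mod_cast ArithmeticFunction.abs_moebius_le_one
  rw [tsum_moebius_div_sq] at h
  convert h using 3 with x
  ring
end
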